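/- Consider curves of matrices X_{1:K}(s) on s ∈ [0,1] with max_k sup_s ‖I − X_k(s)‖_op ≤ κτ where κτ ≤ 1/2 and τ > 0, and define Λ_{K+1}(s) = I, Λ_k(s) = X_k(s)ᵀΛ_{k+1}(s)X_k(s) + τI. Let Δ := 3·max{1, 2κ}·sup_{s∈[0,1]} ∑_{k=1}^K ‖X_k'(s)‖_op, and write M(s) := max_k ‖Λ_k(s)‖_op. If M(0)·Δ < 1, then M(1) ≤ (1 − M(0)Δ)^{−1} M(0). -/

import Mathlib

/-! Each step `Λ ↦ XᵀΛX + τI` with `‖I - X‖ ≤ κτ` loses at most a factor `(1 - κτ)²` of the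
quadratic form and adds `τ I`, so all `Λ_k` are bounded below by `C⁻¹ I`, `C = max 1 (2κ)`.
Differentiating the recursion, `Λ_k' = X_k'ᵀΛ_{k+1}X_k + X_kᵀΛ_{k+1}'X_k + X_kᵀΛ_{k+1}X_k'`; the
lower bound controls these terms relative to `Λ_k` itself, and downward induction gives
`‖RᵀΛ_k'R‖ ≤ 2CM ∑_{j ≥ k} ‖X_j'‖ q` whenever `RᵀΛ_kR ≤ q`. Taking `R = I` yields
`‖Λ_k'‖ ≤ Δ M(s)²`, so `M` obeys the Riccati inequality `M' ≤ Δ M²` and is dominated by the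
solution `M(0) / (1 - M(0) Δ s)` of the comparison equation. -/

open Matrix Set

/-- The `ℓ₂ → ℓ₂` operator norm of a real matrix. -/
noncomputable def opNorm {m n : ℕ} (M : Matrix (Fin m) (Fin n) ℝ) : ℝ :=
  ‖LinearMap.toContinuousLinearMap (Matrix.toEuclideanLin M)‖

open scoped RealInnerProductSpace

theorem ContinuousLinearMap.opNorm_sq_le_of_sq_le {E F : Type*} [SeminormedAddCommGroup E]
    [SeminormedAddCommGroup F] [NormedSpace ℝ E] [NormedSpace ℝ F] {T : E →L[ℝ] F} {a : ℝ}
    (ha : 0 ≤ a) (h : ∀ v, ‖T v‖ ^ 2 ≤ a * ‖v‖ ^ 2) : ‖T‖ ^ 2 ≤ a := by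
  have hT : ‖T‖ ≤ √a := T.opNorm_le_bound (Real.sqrt_nonneg a) fun v => by
    rw [← Real.sqrt_sq (norm_nonneg (T v)), ← Real.sqrt_sq (norm_nonneg v), ← Real.sqrt_mul ha]
    exact Real.sqrt_le_sqrt (h v)
  exact (Real.le_sqrt (norm_nonneg T) ha).1 hT

theorem norm_pi_succ_eq_sup'_Icc {G : Type*} [SeminormedAddCommGroup G] (K : ℕ) (g : ℕ → G) :
    ‖fun i : Fin (K + 1) => g (i + 1)‖
      = (Finset.Icc 1 (K + 1)).sup' (Finset.nonempty_Icc.mpr (Nat.le_add_left 1 K))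
          fun k => ‖g k‖ := by
  refine le_antisymm ((pi_norm_le_iff_of_nonneg ?_).2 fun i => ?_)
    (Finset.sup'_le _ _ fun k hk => ?_)
  · exact (norm_nonneg _).trans
      (Finset.le_sup' (fun k => ‖g k‖) (Finset.left_mem_Icc.2 (by omega)))
  · exact Finset.le_sup' (fun k => ‖g k‖) (by simp; omega)
  · obtain ⟨hk1, hk⟩ := Finset.mem_Icc.1 hk
    obtain ⟨j, rfl⟩ := Nat.exists_eq_add_of_le' hk1
    exact norm_le_pi_norm (fun i : Fin (K + 1) => g (i + 1)) ⟨j, by omega⟩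

section RiccatiComparison

open Filter Topology

variable {F : Type*} [NormedAddCommGroup F] [NormedSpace ℝ F]

theorem norm_le_of_norm_deriv_le_sq_of_lt {f f' : ℝ → F} {a b Δ m δ : ℝ} (hab : a ≤ b)
    (hf : ContinuousOn f (Icc a b)) (hf' : ∀ x ∈ Ico a b, HasDerivWithinAt f (f' x) (Ici x) x)
    (hbound : ∀ x ∈ Ico a b, ‖f' x‖ ≤ Δ * ‖f x‖ ^ 2)
    (hm : 0 < m) (hfa : ‖f a‖ ≤ m) (hδ : Δ < δ) (hsmall : m * δ * (b - a) < 1) :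
    ‖f b‖ ≤ m / (1 - m * δ * (b - a)) := by
  have hden : ∀ x ∈ Icc a b, 0 < 1 - m * δ * (x - a) := fun x hx => by
    rcases le_total 0 (m * δ) with h | h <;> nlinarith [hx.1, hx.2]
  set B : ℝ → ℝ := fun x => m / (1 - m * δ * (x - a))
  have hB : ∀ x ∈ Icc a b, HasDerivAt B (δ * B x ^ 2) x := fun x hx => by
    have h := (((hasDerivAt_id' x).sub_const a).const_mul (m * δ)).const_sub 1
    refine ((hasDerivAt_const x m).div h (hden x hx).ne').congr_deriv ?_
    simp only [B]
    field_simp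
    ring
  refine image_norm_le_of_norm_deriv_right_lt_deriv_boundary' hf hf' (by simpa [B] using hfa)
    (fun x hx => (hB x hx).continuousAt.continuousWithinAt)
    (fun x hx => (hB x (Ico_subset_Icc_self hx)).hasDerivWithinAt) (fun x hx hfx => ?_)
    (right_mem_Icc.2 hab)
  have hBx : 0 < B x := div_pos hm (hden x (Ico_subset_Icc_self hx))
  calc ‖f' x‖ ≤ Δ * B x ^ 2 := hfx ▸ hbound x hx
    _ < δ * B x ^ 2 := by gcongr

theorem norm_le_of_norm_deriv_le_sq {f f' : ℝ → F} {a b Δ : ℝ} (hab : a ≤ b)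
    (hf : ContinuousOn f (Icc a b)) (hf' : ∀ x ∈ Ico a b, HasDerivWithinAt f (f' x) (Ici x) x)
    (hbound : ∀ x ∈ Ico a b, ‖f' x‖ ≤ Δ * ‖f x‖ ^ 2) (hsmall : ‖f a‖ * Δ * (b - a) < 1) :
    ‖f b‖ ≤ ‖f a‖ / (1 - ‖f a‖ * Δ * (b - a)) := by
  -- The fencing lemma needs a strict inequality: compare with the perturbed data
  -- `‖f a‖ + ε`, `Δ + ε` and let `ε → 0`.
  set g : ℝ → ℝ := fun ε => 1 - (‖f a‖ + ε) * (Δ + ε) * (b - a)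
  have hg : Continuous g := by fun_prop
  have hg0 : 0 < g 0 := by simp only [g, add_zero]; linarith
  have hlim : Tendsto (fun ε => (‖f a‖ + ε) / g ε) (𝓝[>] 0)
      (𝓝 (‖f a‖ / (1 - ‖f a‖ * Δ * (b - a)))) := by
    refine ((ContinuousAt.tendsto ?_).mono_left nhdsWithin_le_nhds).trans_eq (by simp [g])
    exact (continuousAt_const.add continuousAt_id).div hg.continuousAt hg0.ne'
  have hev : ∀ᶠ ε in 𝓝[>] 0, 0 < ε ∧ 0 < g ε :=
    (eventually_mem_nhdsWithin (a := (0:ℝ)) (s := Ioi 0)).and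
      (nhdsWithin_le_nhds (continuousAt_const.eventually_lt hg.continuousAt hg0))
  refine ge_of_tendsto hlim (hev.mono fun ε ⟨hε, hgε⟩ => ?_)
  exact norm_le_of_norm_deriv_le_sq_of_lt hab hf hf' hbound (by positivity) (by linarith)
    (by linarith) (by linarith)

end RiccatiComparison

section LyapunovRecursion

open ContinuousLinearMap

variable {E F : Type*} [NormedAddCommGroup E] [InnerProductSpace ℝ E]
  [NormedAddCommGroup F] [InnerProductSpace ℝ F]

theorem opNorm_sq_le_of_coercive {P T : E →L[ℝ] E} {C q : ℝ} (hC : 0 ≤ C) (hq : 0 ≤ q)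
    (hP : ∀ w, ‖w‖ ^ 2 ≤ C * ⟪P w, w⟫) (hT : ∀ v, ⟪P (T v), T v⟫ ≤ q * ‖v‖ ^ 2) :
    ‖T‖ ^ 2 ≤ C * q :=
  opNorm_sq_le_of_sq_le (mul_nonneg hC hq) fun v =>
    (hP (T v)).trans (by rw [mul_assoc]; exact mul_le_mul_of_nonneg_left (hT v) hC)

variable [CompleteSpace E] [CompleteSpace F]

theorem HasDerivAt.adjoint {A : ℝ → E →L[ℝ] F} {A' : E →L[ℝ] F} {s : ℝ}
    (h : HasDerivAt A A' s) : HasDerivAt (fun r => adjoint (A r)) (adjoint A') s := by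
  rw [hasDerivAt_iff_tendsto_slope] at h ⊢
  refine ((ContinuousLinearMap.adjoint.continuous.tendsto A').comp h).congr fun r => ?_
  simp [slope_def_module, map_sub]

theorem norm_adjoint_comp_comp_le (X : E →L[ℝ] F) (L : F →L[ℝ] F) (Y : E →L[ℝ] F) :
    ‖adjoint X ∘L L ∘L Y‖ ≤ ‖X‖ * ‖L‖ * ‖Y‖ :=
  calc ‖adjoint X ∘L L ∘L Y‖ ≤ ‖adjoint X‖ * (‖L‖ * ‖Y‖) :=
        (opNorm_comp_le _ _).trans (by gcongr; exact opNorm_comp_le L Y)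
    _ = ‖X‖ * ‖L‖ * ‖Y‖ := by rw [LinearIsometryEquiv.norm_map, mul_assoc]

theorem inner_adjoint_comp_comp_add_smul_apply (A L : E →L[ℝ] E) (τ : ℝ) (v : E) :
    ⟪(adjoint A ∘L L ∘L A + τ • 1) v, v⟫ = ⟪L (A v), A v⟫ + τ * ‖v‖ ^ 2 := by
  simp [inner_add_left, real_inner_smul_left, adjoint_inner_left]

theorem coercive_adjoint_comp_comp_add_smul {A L : E →L[ℝ] E} {C τ ε : ℝ} (hA : ‖1 - A‖ ≤ ε)
    (hε : ε ≤ 1) (hτ : 2 * ε ≤ C * τ) (hL : ∀ w, ‖w‖ ^ 2 ≤ C * ⟪L w, w⟫) (v : E) :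
    ‖v‖ ^ 2 ≤ C * ⟪(adjoint A ∘L L ∘L A + τ • 1) v, v⟫ := by
  have hAv : (1 - ε) * ‖v‖ ≤ ‖A v‖ := by
    have : ‖v - A v‖ ≤ ε * ‖v‖ := by simpa using ((1 - A).le_opNorm v).trans (by gcongr)
    linarith [norm_sub_norm_le v (A v)]
  have hε0 : 0 ≤ ε := (norm_nonneg _).trans hA
  -- `‖A v‖ ≥ (1 - ε) ‖v‖`, and `(1 - ε)² + 2ε ≥ 1`.
  rw [inner_adjoint_comp_comp_add_smul_apply]
  nlinarith [hL (A v), mul_le_mul hAv hAv (by nlinarith [norm_nonneg v]) (norm_nonneg _),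
    sq_nonneg (ε * ‖v‖), sq_nonneg ‖v‖]

/-- When `L` is positive definite this says `‖L^{-1/2} D L^{-1/2}‖ ≤ b`; testing against all
`R` with `R† L R ≤ q` avoids square roots. -/
def FormBoundedBy (D L : E →L[ℝ] E) (b : ℝ) : Prop :=
  ∀ (R : E →L[ℝ] E) (q : ℝ), 0 ≤ q → (∀ v, ⟪L (R v), R v⟫ ≤ q * ‖v‖ ^ 2) →
    ‖adjoint R ∘L D ∘L R‖ ≤ b * q

theorem FormBoundedBy.zero (L : E →L[ℝ] E) : FormBoundedBy 0 L 0 := by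
  intro R q _ _
  simp

theorem FormBoundedBy.norm_le {D L : E →L[ℝ] E} {b M : ℝ} (h : FormBoundedBy D L b)
    (hL : ‖L‖ ≤ M) : ‖D‖ ≤ b * M := by
  have hM : 0 ≤ M := (norm_nonneg L).trans hL
  have hform : ∀ v, ⟪L v, v⟫ ≤ M * ‖v‖ ^ 2 := fun v =>
    calc ⟪L v, v⟫ ≤ ‖L v‖ * ‖v‖ := real_inner_le_norm _ _
      _ ≤ ‖L‖ * ‖v‖ * ‖v‖ := by gcongr; exact L.le_opNorm v
      _ ≤ M * ‖v‖ ^ 2 := by rw [mul_assoc, ← sq]; gcongr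
  have := h 1 M hM (by simpa using hform)
  rwa [adjoint_one, one_def, id_comp, comp_id] at this

theorem FormBoundedBy.adjoint_comp_comp_add_smul {A A' D L : E →L[ℝ] E} {b C M τ : ℝ}
    (hD : FormBoundedBy D L b) (hC : 0 ≤ C) (hτ : 0 ≤ τ) (hLM : ‖L‖ ≤ M)
    (hL : ∀ w, ‖w‖ ^ 2 ≤ C * ⟪L w, w⟫)
    (hL' : ∀ w, ‖w‖ ^ 2 ≤ C * ⟪(adjoint A ∘L L ∘L A + τ • 1) w, w⟫) :
    FormBoundedBy (adjoint A' ∘L L ∘L A + adjoint A ∘L (D ∘L A + L ∘L A'))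
      (adjoint A ∘L L ∘L A + τ • 1) (2 * C * M * ‖A'‖ + b) := by
  intro R q hq hR
  set S := A ∘L R
  have hS : ∀ v, ⟪L (S v), S v⟫ ≤ q * ‖v‖ ^ 2 := fun v => by
    have := hR v
    show ⟪L (A (R v)), A (R v)⟫ ≤ _
    rw [inner_adjoint_comp_comp_add_smul_apply] at this
    nlinarith [sq_nonneg ‖R v‖]
  have hRS : ‖R‖ * ‖S‖ ≤ C * q := by
    have hR2 := opNorm_sq_le_of_coercive hC hq hL' hR
    have hS2 := opNorm_sq_le_of_coercive hC hq hL hS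
    nlinarith [sq_nonneg (‖R‖ - ‖S‖)]
  have hsplit : adjoint R ∘L (adjoint A' ∘L L ∘L A + adjoint A ∘L (D ∘L A + L ∘L A')) ∘L R
      = adjoint (A' ∘L R) ∘L L ∘L S + adjoint S ∘L D ∘L S + adjoint S ∘L L ∘L (A' ∘L R) := by
    simp only [S, adjoint_comp, add_comp, comp_add, comp_assoc, add_assoc]
  have hM : 0 ≤ M := (norm_nonneg L).trans hLM
  rw [hsplit]
  calc _ ≤ ‖A' ∘L R‖ * ‖L‖ * ‖S‖ + b * q + ‖S‖ * ‖L‖ * ‖A' ∘L R‖ :=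
        norm_add₃_le.trans (add_le_add_three (norm_adjoint_comp_comp_le _ _ _)
          (hD S q hq hS) (norm_adjoint_comp_comp_le _ _ _))
    _ ≤ ‖A'‖ * ‖R‖ * M * ‖S‖ + b * q + ‖S‖ * M * (‖A'‖ * ‖R‖) := by
        gcongr <;> exact opNorm_comp_le A' R
    _ = 2 * (M * ‖A'‖) * (‖R‖ * ‖S‖) + b * q := by ring
    _ ≤ 2 * (M * ‖A'‖) * (C * q) + b * q := by gcongr
    _ = (2 * C * M * ‖A'‖ + b) * q := by ring

theorem coercive_of_lyapunov_recursion {K : ℕ} {A L : ℕ → E →L[ℝ] E} {C τ ε : ℝ}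
    (htop : L (K + 1) = 1)
    (hrec : ∀ k, 1 ≤ k → k ≤ K → L k = adjoint (A k) ∘L L (k + 1) ∘L A k + τ • 1)
    (hA : ∀ k, 1 ≤ k → k ≤ K → ‖1 - A k‖ ≤ ε) (hε : ε ≤ 1) (hτ : 2 * ε ≤ C * τ) (hC : 1 ≤ C)
    {k : ℕ} (hk1 : 1 ≤ k) (hk : k ≤ K + 1) (v : E) : ‖v‖ ^ 2 ≤ C * ⟪L k v, v⟫ := by
  induction hk using Nat.decreasingInduction generalizing v with
  | self =>
    rw [htop, one_apply_eq_self, real_inner_self_eq_norm_sq]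
    nlinarith [sq_nonneg ‖v‖]
  | of_succ k hk ih =>
    rw [hrec k hk1 (by omega)]
    exact coercive_adjoint_comp_comp_add_smul (hA k hk1 (by omega)) hε hτ (ih (by omega)) v

theorem exists_hasDerivAt_formBoundedBy_of_lyapunov_recursion {K : ℕ}
    {A L : ℕ → ℝ → E →L[ℝ] E} {A' : ℕ → E →L[ℝ] E} {C M τ s : ℝ}
    (htop : ∀ r, L (K + 1) r = 1)
    (hrec : ∀ k, 1 ≤ k → k ≤ K → ∀ r, L k r = adjoint (A k r) ∘L L (k + 1) r ∘L A k r + τ • 1)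
    (hA' : ∀ k, 1 ≤ k → k ≤ K → HasDerivAt (A k) (A' k) s)
    (hL : ∀ k, 1 ≤ k → k ≤ K + 1 → ∀ v, ‖v‖ ^ 2 ≤ C * ⟪L k s v, v⟫)
    (hLM : ∀ k, 1 ≤ k → k ≤ K + 1 → ‖L k s‖ ≤ M) (hC : 0 ≤ C) (hτ : 0 ≤ τ)
    {k : ℕ} (hk1 : 1 ≤ k) (hk : k ≤ K + 1) :
    ∃ D, HasDerivAt (L k) D s ∧
      FormBoundedBy D (L k s) (2 * C * M * ∑ j ∈ Finset.Icc k K, ‖A' j‖) := by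
  induction hk using Nat.decreasingInduction with
  | self =>
    refine ⟨0, ?_, ?_⟩
    · rw [funext htop]
      exact hasDerivAt_const s 1
    · rw [Finset.Icc_eq_empty (by omega), Finset.sum_empty, mul_zero]
      exact FormBoundedBy.zero _
  | of_succ k hk ih =>
    obtain ⟨D, hD, hDb⟩ := ih (by omega)
    have hkK : k ≤ K := by omega
    refine ⟨adjoint (A' k) ∘L L (k + 1) s ∘L A k s +
      adjoint (A k s) ∘L (D ∘L A k s + L (k + 1) s ∘L A' k), ?_, ?_⟩
    · rw [funext (hrec k hk1 hkK)]
      exact ((hA' k hk1 hkK).adjoint.clm_comp (hD.clm_comp (hA' k hk1 hkK))).add_const _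
    · have hb := hDb.adjoint_comp_comp_add_smul (A := A k s) (A' := A' k) hC hτ
        (hLM (k + 1) (by omega) (by omega)) (hL (k + 1) (by omega) (by omega))
        (hrec k hk1 hkK s ▸ hL k hk1 (by omega))
      rwa [hrec k hk1 hkK s, ← Finset.add_sum_Ioc_eq_sum_Icc hkK,
        ← Finset.Icc_add_one_left_eq_Ioc, mul_add]

theorem exists_hasDerivAt_pi_of_lyapunov_recursion {K : ℕ} {A L : ℕ → ℝ → E →L[ℝ] E}
    {A' : ℕ → E →L[ℝ] E} {C τ ε s : ℝ} (htop : ∀ r, L (K + 1) r = 1)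
    (hrec : ∀ k, 1 ≤ k → k ≤ K → ∀ r, L k r = adjoint (A k r) ∘L L (k + 1) r ∘L A k r + τ • 1)
    (hA : ∀ k, 1 ≤ k → k ≤ K → ‖1 - A k s‖ ≤ ε)
    (hA' : ∀ k, 1 ≤ k → k ≤ K → HasDerivAt (A k) (A' k) s)
    (hε : ε ≤ 1) (hτ : 0 ≤ τ) (hετ : 2 * ε ≤ C * τ) (hC : 1 ≤ C) :
    ∃ D, HasDerivAt (fun r (i : Fin (K + 1)) => L (i + 1) r) D s ∧
      ‖D‖ ≤ 2 * C * (∑ j ∈ Finset.Icc 1 K, ‖A' j‖) * ‖fun i : Fin (K + 1) => L (i + 1) s‖ ^ 2 := by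
  set M := ‖fun i : Fin (K + 1) => L (i + 1) s‖
  have hLM : ∀ k, 1 ≤ k → k ≤ K + 1 → ‖L k s‖ ≤ M := fun k hk1 hk =>
    (Finset.le_sup' (fun k => ‖L k s‖) (Finset.mem_Icc.2 ⟨hk1, hk⟩)).trans_eq
      (norm_pi_succ_eq_sup'_Icc K fun k => L k s).symm
  have hL : ∀ k, 1 ≤ k → k ≤ K + 1 → ∀ v, ‖v‖ ^ 2 ≤ C * ⟪L k s v, v⟫ := fun k hk1 hk =>
    coercive_of_lyapunov_recursion (htop s) (fun k hk1 hk => hrec k hk1 hk s) hA hε hετ hC hk1 hk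
  have hD : ∀ i : Fin (K + 1), ∃ D, HasDerivAt (fun r => L (i + 1) r) D s ∧
      ‖D‖ ≤ 2 * C * (∑ j ∈ Finset.Icc 1 K, ‖A' j‖) * M ^ 2 := by
    intro i
    obtain ⟨D, hD, hDb⟩ := exists_hasDerivAt_formBoundedBy_of_lyapunov_recursion htop hrec hA'
      hL hLM (by linarith) hτ (k := i + 1) (by omega) (by omega)
    refine ⟨D, hD, (hDb.norm_le (hLM _ (by omega) (by omega))).trans ?_⟩
    have hsub : ∑ j ∈ Finset.Icc ((i : ℕ) + 1) K, ‖A' j‖ ≤ ∑ j ∈ Finset.Icc 1 K, ‖A' j‖ :=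
      Finset.sum_le_sum_of_subset_of_nonneg (Finset.Icc_subset_Icc_left (by omega))
        fun _ _ _ => norm_nonneg _
    calc _ = 2 * C * (∑ j ∈ Finset.Icc ((i : ℕ) + 1) K, ‖A' j‖) * M ^ 2 := by ring
      _ ≤ _ := by gcongr
  choose D hD using hD
  exact ⟨D, hasDerivAt_pi.2 fun i => (hD i).1,
    (pi_norm_le_iff_of_nonneg (by positivity)).2 fun i => (hD i).2⟩

end LyapunovRecursion

section MatrixToEuclidean

open ContinuousLinearMap

variable {ι : Type*} [Fintype ι] [DecidableEq ι]

theorem Matrix.toEuclideanCLM_transpose (M : Matrix ι ι ℝ) :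
    toEuclideanCLM (𝕜 := ℝ) Mᵀ = adjoint (toEuclideanCLM (𝕜 := ℝ) M) := by
  rw [← star_eq_adjoint, ← map_star, star_eq_conjTranspose, conjTranspose_eq_transpose_of_trivial]

theorem Matrix.hasDerivAt_toEuclideanCLM {f : ℝ → Matrix ι ι ℝ} {g : Matrix ι ι ℝ} {s : ℝ}
    (h : ∀ i j, HasDerivAt (fun r => f r i j) (g i j) s) :
    HasDerivAt (fun r => toEuclideanCLM (𝕜 := ℝ) (f r)) (toEuclideanCLM (𝕜 := ℝ) g) s := by
  let Φ : (ι → ι → ℝ) →L[ℝ] (EuclideanSpace ℝ ι →L[ℝ] EuclideanSpace ℝ ι) :=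
    LinearMap.toContinuousLinearMap
      ((toEuclideanCLM (𝕜 := ℝ)).toAlgEquiv.toLinearEquiv.toLinearMap ∘ₗ
        (ofLinearEquiv ℝ).toLinearMap)
  have hf : HasDerivAt (fun r i j => f r i j) (fun i j => g i j) s :=
    hasDerivAt_pi.2 fun i => hasDerivAt_pi.2 (h i)
  exact Φ.hasFDerivAt.comp_hasDerivAt s hf

theorem Matrix.toEuclideanCLM_transpose_mul_mul_add_smul (X Λ : Matrix ι ι ℝ) (τ : ℝ) :
    toEuclideanCLM (𝕜 := ℝ) (Xᵀ * Λ * X + τ • 1)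
      = adjoint (toEuclideanCLM (𝕜 := ℝ) X) ∘L toEuclideanCLM (𝕜 := ℝ) Λ ∘L
          toEuclideanCLM (𝕜 := ℝ) X + τ • 1 := by
  rw [map_add, map_mul, map_mul, map_smul, map_one, toEuclideanCLM_transpose, mul_assoc]
  rfl

end MatrixToEuclidean

theorem opNorm_eq_norm_toEuclideanCLM {n : ℕ} (M : Matrix (Fin n) (Fin n) ℝ) :
    opNorm M = ‖toEuclideanCLM (𝕜 := ℝ) M‖ :=
  rfl

theorem exists_hasDerivAt_pi_of_matrix_lyapunov_recursion {n K : ℕ} {τ κ s : ℝ}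
    {X X' Λ : ℕ → ℝ → Matrix (Fin n) (Fin n) ℝ} (hτ : 0 ≤ τ) (hκτ : κ * τ ≤ 1 / 2)
    (hX : ∀ k, 1 ≤ k → k ≤ K → opNorm (1 - X k s) ≤ κ * τ)
    (hX' : ∀ k, 1 ≤ k → k ≤ K → ∀ i j, HasDerivAt (fun r => X k r i j) (X' k s i j) s)
    (hΛtop : ∀ r, Λ (K + 1) r = 1)
    (hrec : ∀ k, 1 ≤ k → k ≤ K → ∀ r, Λ k r = (X k r)ᵀ * Λ (k + 1) r * X k r + τ • 1) :
    ∃ D, HasDerivAt (fun r (i : Fin (K + 1)) => toEuclideanCLM (𝕜 := ℝ) (Λ (i + 1) r)) D s ∧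
      ‖D‖ ≤ 2 * max 1 (2 * κ) * (∑ j ∈ Finset.Icc 1 K, opNorm (X' j s)) *
        ‖fun i : Fin (K + 1) => toEuclideanCLM (𝕜 := ℝ) (Λ (i + 1) s)‖ ^ 2 := by
  simp only [opNorm_eq_norm_toEuclideanCLM] at hX ⊢
  refine exists_hasDerivAt_pi_of_lyapunov_recursion (ε := κ * τ)
    (A := fun k r => toEuclideanCLM (𝕜 := ℝ) (X k r))
    (L := fun k r => toEuclideanCLM (𝕜 := ℝ) (Λ k r)) (fun r => by simp [hΛtop])
    (fun k hk1 hk r => ?_) (by simpa using hX)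
    (fun k hk1 hk => hasDerivAt_toEuclideanCLM (hX' k hk1 hk)) (by linarith) hτ
    (by nlinarith [le_max_right 1 (2 * κ)]) (le_max_left _ _)
  simp only [hrec k hk1 hk r, toEuclideanCLM_transpose_mul_mul_add_smul]

/-- Average perturbation of Lyapunov solutions: for C¹ curves `X_k(s)` with
`‖I − X_k(s)‖_op ≤ κτ ≤ 1/2`, the Lyapunov recursion `Λ_{K+1}(s) = I`,
`Λ_k(s) = X_k(s)ᵀ Λ_{k+1}(s) X_k(s) + τ I`, and
`Δ ≥ 3 max{1, 2κ} sup_s ∑_k ‖X_k'(s)‖_op`, writing `M(s) = max_k ‖Λ_k(s)‖_op`: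
if `M(0)Δ < 1` then `M(1) ≤ (1 − M(0)Δ)⁻¹ M(0)`. -/
theorem lyapunov_average_perturbation {n K : ℕ}
    (τ κ Δ : ℝ) (hτ : 0 < τ) (hκτ : κ * τ ≤ 1 / 2)
    (X X' : ℕ → ℝ → Matrix (Fin n) (Fin n) ℝ)
    (Λ : ℕ → ℝ → Matrix (Fin n) (Fin n) ℝ)
    (hX : ∀ k, 1 ≤ k → k ≤ K → ∀ s ∈ Icc (0:ℝ) 1, opNorm (1 - X k s) ≤ κ * τ)
    (hX' : ∀ k, 1 ≤ k → k ≤ K → ∀ s ∈ Icc (0:ℝ) 1, ∀ i j,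
      HasDerivAt (fun r => X k r i j) (X' k s i j) s)
    (hΛtop : ∀ s, Λ (K + 1) s = 1)
    (hrec : ∀ k, 1 ≤ k → k ≤ K → ∀ s,
      Λ k s = (X k s)ᵀ * Λ (k + 1) s * X k s + τ • (1 : Matrix (Fin n) (Fin n) ℝ))
    (hΔ : ∀ s ∈ Icc (0:ℝ) 1,
      3 * max 1 (2 * κ) * ∑ k ∈ Finset.Icc 1 K, opNorm (X' k s) ≤ Δ)
    (hsmall :
      ((Finset.Icc 1 (K + 1)).sup' (Finset.nonempty_Icc.mpr (by omega))
        fun k => opNorm (Λ k 0)) * Δ < 1) :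
    ((Finset.Icc 1 (K + 1)).sup' (Finset.nonempty_Icc.mpr (by omega))
        fun k => opNorm (Λ k 1))
      ≤ (1 - ((Finset.Icc 1 (K + 1)).sup' (Finset.nonempty_Icc.mpr (by omega))
            fun k => opNorm (Λ k 0)) * Δ)⁻¹
        * ((Finset.Icc 1 (K + 1)).sup' (Finset.nonempty_Icc.mpr (by omega))
            fun k => opNorm (Λ k 0)) := by
  let f : ℝ → Fin (K + 1) → _ := fun r i => toEuclideanCLM (𝕜 := ℝ) (Λ (i + 1) r)
  have hderiv : ∀ s ∈ Icc (0:ℝ) 1, HasDerivAt f (deriv f s) s ∧ ‖deriv f s‖ ≤ Δ * ‖f s‖ ^ 2 := by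
    intro s hs
    obtain ⟨D, hD, hDb⟩ := exists_hasDerivAt_pi_of_matrix_lyapunov_recursion hτ.le hκτ
      (fun k hk1 hk => hX k hk1 hk s hs) (fun k hk1 hk => hX' k hk1 hk s hs) hΛtop hrec
    have hS : 0 ≤ max 1 (2 * κ) * ∑ j ∈ Finset.Icc 1 K, opNorm (X' j s) :=
      mul_nonneg (zero_le_one.trans (le_max_left _ _))
        (Finset.sum_nonneg fun j _ => norm_nonneg (toEuclideanCLM (𝕜 := ℝ) (X' j s)))
    rw [hD.deriv]
    refine ⟨hD, hDb.trans ?_⟩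
    gcongr
    linarith [hΔ s hs]
  have hM : ∀ s, ‖f s‖ = (Finset.Icc 1 (K + 1)).sup' (Finset.nonempty_Icc.mpr (by omega))
      fun k => opNorm (Λ k s) :=
    fun s => norm_pi_succ_eq_sup'_Icc K fun k => toEuclideanCLM (𝕜 := ℝ) (Λ k s)
  have hf := norm_le_of_norm_deriv_le_sq zero_le_one
    (fun s hs => (hderiv s hs).1.continuousAt.continuousWithinAt)
    (fun s hs => (hderiv s (Ico_subset_Icc_self hs)).1.hasDerivWithinAt)
    (fun s hs => (hderiv s (Ico_subset_Icc_self hs)).2)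
    (by rwa [hM, sub_zero, mul_one])
  rwa [hM, hM, sub_zero, mul_one, div_eq_inv_mul] at hf
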